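/- If two vertices u and v of a graph G have the property that the multiset of anonymous walks of length l starting at u differs from that starting at v (for some l), then no automorphism of G maps u to v. -/

import Mathlib

/-- First position at which vertex `w i` appears in `w`. -/
def anon {V : Type*} [DecidableEq V] {L : ℕ} (w : Fin (L + 1) → V) (i : Fin (L + 1)) :
    Fin (L + 1) :=
  (Finset.univ.filter (fun j => w j = w i)).min' ⟨i, by simp⟩

/-- Number of walks of length `l` in `G` starting at `x` whose anonymous sequence is `φ`. -/
def anonWalkCount {V : Type*} [Fintype V] [DecidableEq V] (G : SimpleGraph V)
    [DecidableRel G.Adj] (l : ℕ) (x : V) (φ : Fin (l + 1) → Fin (l + 1)) : ℕ :=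
  (Finset.univ.filter (fun w : Fin (l + 1) → V =>
    w 0 = x ∧ (∀ i : Fin l, G.Adj (w i.castSucc) (w i.succ)) ∧ anon w = φ)).card

theorem anon_comp_of_injective {V W : Type*} [DecidableEq V] [DecidableEq W] {L : ℕ} {g : V → W}
    (hg : Function.Injective g) (w : Fin (L + 1) → V) : anon (g ∘ w) = anon w := by
  funext i
  simp only [anon, Function.comp_apply, hg.eq_iff]

theorem anonWalkCount_iso_apply {V W : Type*} [Fintype V] [DecidableEq V] [Fintype W]
    [DecidableEq W] {G : SimpleGraph V} {H : SimpleGraph W} [DecidableRel G.Adj]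
    [DecidableRel H.Adj] (f : G ≃g H) (l : ℕ) (x : V) (φ : Fin (l + 1) → Fin (l + 1)) :
    anonWalkCount H l (f x) φ = anonWalkCount G l x φ := by
  refine (Finset.card_equiv ((Equiv.refl _).arrowCongr f.toEquiv) fun w => ?_).symm
  change _ ↔ f ∘ w ∈ _
  simp only [Finset.mem_filter, Finset.mem_univ, true_and, Function.comp_apply,
    f.apply_eq_iff_eq, f.map_adj_iff, anon_comp_of_injective f.injective]

/-- If the multiset of anonymous walks of length `l` starting at `u`
differs from that starting at `v` (i.e. some anonymous sequence is realized by a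
different number of walks), then no automorphism of `G` maps `u` to `v`. -/
theorem no_automorphism_of_anon_distribution_ne {V : Type*} [Fintype V] [DecidableEq V]
    (G : SimpleGraph V) [DecidableRel G.Adj] (u v : V) (l : ℕ)
    (h : ∃ φ : Fin (l + 1) → Fin (l + 1), anonWalkCount G l u φ ≠ anonWalkCount G l v φ) :
    ∀ f : G ≃g G, f u ≠ v := by
  rintro f rfl
  obtain ⟨φ, hφ⟩ := h
  exact hφ (anonWalkCount_iso_apply f l u φ).symm
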